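/- Let k be a field of characteristic 2 and R = k[X,Y,Z]/(X² + Y³ + Z⁵), graded by deg X = 15, deg Y = 10, deg Z = 6. Then there is an isomorphism of graded R-modules Syz_R(X², Y², Z²) ≅ R(-30) ⊕ R(-32). -/

import Mathlib

/-!
In `R`, `x² + y·y² + z³·z² = 0`: this gives the syzygy `(1, y, z³)` of degree 30, next to the
Koszul syzygy `(0, z², -y²)` of degree 32. For any syzygy `(a, b, c)`, `(b - a y, c - a z³)` is a
syzygy of `(y², z²)`, so the two form a basis as soon as `y², z²` is a regular sequence in `R`.
It is one because `R ≅ k[Y, Z][X]/(X² + Y³ + Z⁵)` is free over `k[Y, Z]`, where `Y²` and `Z²` are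
coprime.
-/

/-- The linear map `(a₁,…,aₙ) ↦ Σ aᵢ·gᵢ`; the syzygy module
`Syz_R(g₁,…,gₙ)` is its kernel. -/
noncomputable def syzMap {R : Type*} [CommRing R] {n : ℕ} (g : Fin n → R) :
    (Fin n → R) →ₗ[R] R :=
  ∑ i, (LinearMap.proj i : (Fin n → R) →ₗ[R] R).smulRight (g i)

/-- `v` is a homogeneous element whose components lie in the graded pieces
`𝒜 e₀, 𝒜 e₁, 𝒜 e₂`. -/
def pieceCond {k R : Type*} [Semiring k] [AddCommMonoid R] [Module k R]
    (𝒜 : ℤ → Submodule k R) (e0 e1 e2 : ℤ) (v : Fin 3 → R) : Prop :=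
  v 0 ∈ 𝒜 e0 ∧ v 1 ∈ 𝒜 e1 ∧ v 2 ∈ 𝒜 e2

def HasKoszulSyzygies {R : Type*} [CommRing R] (u v : R) : Prop :=
  ∀ b c : R, b * u + c * v = 0 → ∃ t, b = t * v ∧ c = -(t * u)

section Koszul

variable {R S : Type*} [CommRing R] [CommRing S]

theorem hasKoszulSyzygies_of_isRelPrime [IsDomain R] [DecompositionMonoid R] {u v : R}
    (h : IsRelPrime u v) (hv : v ≠ 0) : HasKoszulSyzygies u v := by
  intro b c hbc
  obtain ⟨t, rfl⟩ : v ∣ b := h.symm.dvd_of_dvd_mul_right ⟨-c, by linear_combination hbc⟩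
  refine ⟨t, mul_comm v t, mul_right_cancel₀ hv ?_⟩
  linear_combination hbc

theorem HasKoszulSyzygies.map (e : R ≃+* S) {u v : R} (h : HasKoszulSyzygies u v) :
    HasKoszulSyzygies (e u) (e v) := by
  intro b c hbc
  obtain ⟨t, hb, hc⟩ := h (e.symm b) (e.symm c) (by simpa using congrArg e.symm hbc)
  exact ⟨e t, by simpa using congrArg e hb, by simpa using congrArg e hc⟩

theorem IsSMulRegular.map_ringEquiv (e : R ≃+* S) {r : R} (h : IsSMulRegular R r) :
    IsSMulRegular S (e r) := by
  intro a b hab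
  apply e.symm.injective
  apply h
  simpa using congrArg e.symm hab

theorem HasKoszulSyzygies.map_algebraMap [Algebra R S] {ι : Type*} [Fintype ι]
    (bS : Module.Basis ι R S) {u v : R} (h : HasKoszulSyzygies u v) :
    HasKoszulSyzygies (algebraMap R S u) (algebraMap R S v) := by
  intro b c hbc
  have hsmul : u • b + v • c = 0 := by
    rw [Algebra.smul_def, Algebra.smul_def]
    linear_combination hbc
  have hcoord (i : ι) : bS.repr b i * u + bS.repr c i * v = 0 := by
    simpa [mul_comm] using congrArg (fun s => bS.repr s i) hsmul
  choose t ht using fun i => h _ _ (hcoord i)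
  have hexpand (s : S) (w : R) (hs : ∀ i, bS.repr s i = t i * w) :
      s = (∑ i, t i • bS i) * algebraMap R S w := by
    conv_lhs => rw [← bS.sum_repr s]
    rw [Finset.sum_mul]
    refine Finset.sum_congr rfl fun i _ => ?_
    rw [hs i, Algebra.smul_def, Algebra.smul_def, map_mul]
    ring
  refine ⟨∑ i, t i • bS i, hexpand b v fun i => (ht i).1, ?_⟩
  rw [← mul_neg, ← map_neg]
  exact hexpand c (-u) fun i => by rw [(ht i).2, mul_neg]

end Koszul

section Syzygies

variable {R : Type*} [CommRing R]

theorem syzMap_apply {n : ℕ} (g v : Fin n → R) : syzMap g v = ∑ i, v i * g i := by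
  simp [syzMap]

theorem exists_basis_ker_syzMap {p q r α β : R} (hrel : p + α * q + β * r = 0)
    (hqr : HasKoszulSyzygies q r) (hr : IsSMulRegular R r) :
    ∃ bs : Module.Basis (Fin 2) R (LinearMap.ker (syzMap ![p, q, r])),
      (bs 0 : Fin 3 → R) = ![1, α, β] ∧ (bs 1 : Fin 3 → R) = ![0, r, -q] := by
  have mem_ker (w : Fin 3 → R) :
      w ∈ LinearMap.ker (syzMap ![p, q, r]) ↔ w 0 * p + w 1 * q + w 2 * r = 0 := by
    simp [syzMap_apply, Fin.sum_univ_three]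
  let e₁ : LinearMap.ker (syzMap ![p, q, r]) :=
    ⟨![1, α, β], (mem_ker _).2 (show 1 * p + α * q + β * r = 0 by linear_combination hrel)⟩
  let e₂ : LinearMap.ker (syzMap ![p, q, r]) :=
    ⟨![0, r, -q], (mem_ker _).2 (show 0 * p + r * q + -q * r = 0 by ring)⟩
  have coe_comb (s t : R) :
      ((s • e₁ + t • e₂ : LinearMap.ker _) : Fin 3 → R) = ![s, s * α + t * r, s * β - t * q] := by
    ext i; fin_cases i <;> simp [e₁, e₂, sub_eq_add_neg]
  have hli : LinearIndependent R ![e₁, e₂] := by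
    refine LinearIndependent.pair_iff.2 fun s t hst => ?_
    have hcoe := coe_comb s t ▸ congrArg Subtype.val hst
    obtain rfl : s = 0 := congrFun hcoe 0
    have h₁ : t * r = 0 := by simpa using congrFun hcoe 1
    exact ⟨rfl, hr (by simpa [smul_eq_mul, mul_comm] using h₁)⟩
  have hsp : ⊤ ≤ Submodule.span R (Set.range ![e₁, e₂]) := by
    rintro ⟨w, hw⟩ -
    rw [Matrix.range_cons_cons_empty, Submodule.mem_span_pair]
    obtain ⟨t, h₁, h₂⟩ := hqr (w 1 - w 0 * α) (w 2 - w 0 * β)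
      (by linear_combination (mem_ker w).1 hw - w 0 * hrel)
    refine ⟨w 0, t, Subtype.ext ?_⟩
    rw [coe_comb]
    ext i; fin_cases i
    · rfl
    · show w 0 * α + t * r = w 1
      linear_combination -h₁
    · show w 0 * β - t * q = w 2
      linear_combination -h₂
  exact ⟨Module.Basis.mk hli hsp, by simp [e₁], by simp [e₂]⟩

end Syzygies

section E8

open MvPolynomial

variable (k : Type*) [Field k]

local notation "R₈" => MvPolynomial (Fin 3) k ⧸
  Ideal.span {(X 0 ^ 2 + X 1 ^ 3 + X 2 ^ 5 : MvPolynomial (Fin 3) k)}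

/-- `X² + Y³ + Z⁵` as a quadratic in `X` over `k[Y, Z]`, where `Y, Z` are now `X 0, X 1`. -/
noncomputable def e8Quadratic : Polynomial (MvPolynomial (Fin 2) k) :=
  Polynomial.X ^ 2 + Polynomial.C (X 0 ^ 3 + X 1 ^ 5)

theorem e8Quadratic_monic : (e8Quadratic k).Monic :=
  Polynomial.monic_X_pow_add_C _ two_ne_zero

noncomputable def e8EquivAdjoinRoot : R₈ ≃+* AdjoinRoot (e8Quadratic k) :=
  Ideal.quotientEquiv _ _ (finSuccEquiv k 2).toRingEquiv <| by
    rw [Ideal.map_span, Set.image_singleton]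
    congr 2
    change _ = finSuccEquiv k 2 _
    rw [show (1 : Fin 3) = Fin.succ 0 from rfl, show (2 : Fin 3) = Fin.succ 1 from rfl]
    simp only [e8Quadratic, map_add, map_pow, finSuccEquiv_X_zero, finSuccEquiv_X_succ, add_assoc]

theorem e8EquivAdjoinRoot_mk (P : MvPolynomial (Fin 3) k) :
    e8EquivAdjoinRoot k (Ideal.Quotient.mk _ P) = AdjoinRoot.mk _ (finSuccEquiv k 2 P) :=
  Ideal.quotientEquiv_mk _ _ _ _ P

theorem e8EquivAdjoinRoot_symm_of_X (i : Fin 2) :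
    (e8EquivAdjoinRoot k).symm (AdjoinRoot.of _ (X i)) = Ideal.Quotient.mk _ (X i.succ) := by
  rw [RingEquiv.symm_apply_eq, e8EquivAdjoinRoot_mk, finSuccEquiv_X_succ, AdjoinRoot.mk_C]

theorem hasKoszulSyzygies_e8 :
    HasKoszulSyzygies (Ideal.Quotient.mk _ (X 1) ^ 2 : R₈) (Ideal.Quotient.mk _ (X 2) ^ 2) := by
  have hA : HasKoszulSyzygies (X 0 ^ 2 : MvPolynomial (Fin 2) k) (X 1 ^ 2) :=
    hasKoszulSyzygies_of_isRelPrime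
      ((X_prime.irreducible.isRelPrime_iff_not_dvd).2 (by simp [X_dvd_X])).pow
      (pow_ne_zero _ (X_ne_zero _))
  simpa [AdjoinRoot.algebraMap_eq, e8EquivAdjoinRoot_symm_of_X] using
    (hA.map_algebraMap (AdjoinRoot.powerBasis' (e8Quadratic_monic k)).basis).map
      (e8EquivAdjoinRoot k).symm

theorem isSMulRegular_e8 : IsSMulRegular R₈ (Ideal.Quotient.mk _ (X 2) ^ 2 : R₈) := by
  have := (e8Quadratic_monic k).free_adjoinRoot
  simpa [AdjoinRoot.algebraMap_eq, e8EquivAdjoinRoot_symm_of_X] using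
    ((IsSMulRegular.of_ne_zero (M := MvPolynomial (Fin 2) k)
      (pow_ne_zero 2 (X_ne_zero 1))).of_flat (S := AdjoinRoot (e8Quadratic k))).map_ringEquiv
        (e8EquivAdjoinRoot k).symm

end E8

theorem stmt_18_general {k : Type*} [Field k]
    (𝒜 : ℤ → Submodule k (MvPolynomial (Fin 3) k ⧸
      Ideal.span {MvPolynomial.X 0 ^ 2 + MvPolynomial.X 1 ^ 3 +
        MvPolynomial.X 2 ^ 5}))
    [GradedAlgebra 𝒜]
    (hY : Ideal.Quotient.mk _ (MvPolynomial.X 1) ∈ 𝒜 10)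
    (hZ : Ideal.Quotient.mk _ (MvPolynomial.X 2) ∈ 𝒜 6) :
    let R := MvPolynomial (Fin 3) k ⧸
      Ideal.span {MvPolynomial.X 0 ^ 2 + MvPolynomial.X 1 ^ 3 +
        MvPolynomial.X 2 ^ 5}
    let x : R := Ideal.Quotient.mk _ (MvPolynomial.X 0)
    let y : R := Ideal.Quotient.mk _ (MvPolynomial.X 1)
    let z : R := Ideal.Quotient.mk _ (MvPolynomial.X 2)
    ∃ bs : Module.Basis (Fin 2) R (LinearMap.ker (syzMap ![x ^ 2, y ^ 2, z ^ 2])),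
      pieceCond 𝒜 (30 - 30) (30 - 20) (30 - 12) (bs 0 : Fin 3 → R) ∧
      pieceCond 𝒜 (32 - 30) (32 - 20) (32 - 12) (bs 1 : Fin 3 → R) := by
  intro R x y z
  have hrel : x ^ 2 + y * y ^ 2 + z ^ 3 * z ^ 2 = 0 := by
    have hF := Ideal.Quotient.eq_zero_iff_mem.2 (Ideal.subset_span (Set.mem_singleton
      (MvPolynomial.X 0 ^ 2 + MvPolynomial.X 1 ^ 3 + MvPolynomial.X 2 ^ 5 :
        MvPolynomial (Fin 3) k)))
    simp only [map_add, map_pow] at hF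
    linear_combination hF
  obtain ⟨bs, hb₀, hb₁⟩ :=
    exists_basis_ker_syzMap hrel (hasKoszulSyzygies_e8 k) (isSMulRegular_e8 k)
  refine ⟨bs, ?_, ?_⟩
  · rw [pieceCond, hb₀]
    exact ⟨SetLike.one_mem_graded 𝒜, hY, SetLike.pow_mem_graded 3 hZ⟩
  · rw [pieceCond, hb₁]
    exact ⟨zero_mem _, SetLike.pow_mem_graded 2 hZ, neg_mem (SetLike.pow_mem_graded 2 hY)⟩

/-- Let `char k = 2` and `R = k[X,Y,Z]/(X²+Y³+Z⁵)`, graded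
with `deg X = 15, deg Y = 10, deg Z = 6`. Then
`Syz_R(X²,Y²,Z²) ≅ R(-30) ⊕ R(-32)` as graded `R`-modules, i.e. the syzygy
module is free on two homogeneous generators of total degrees `30` and `32`
(a generator of total degree `t` has components in
`𝒜 (t-30), 𝒜 (t-20), 𝒜 (t-12)`, since `deg X² = 30, deg Y² = 20,
deg Z² = 12`). -/
theorem stmt_18 {k : Type*} [Field k] [CharP k 2]
    (𝒜 : ℤ → Submodule k (MvPolynomial (Fin 3) k ⧸
      Ideal.span {MvPolynomial.X 0 ^ 2 + MvPolynomial.X 1 ^ 3 +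
        MvPolynomial.X 2 ^ 5}))
    [GradedAlgebra 𝒜]
    (hX : Ideal.Quotient.mk _ (MvPolynomial.X 0) ∈ 𝒜 15)
    (hY : Ideal.Quotient.mk _ (MvPolynomial.X 1) ∈ 𝒜 10)
    (hZ : Ideal.Quotient.mk _ (MvPolynomial.X 2) ∈ 𝒜 6) :
    let R := MvPolynomial (Fin 3) k ⧸
      Ideal.span {MvPolynomial.X 0 ^ 2 + MvPolynomial.X 1 ^ 3 +
        MvPolynomial.X 2 ^ 5}
    let x : R := Ideal.Quotient.mk _ (MvPolynomial.X 0)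
    let y : R := Ideal.Quotient.mk _ (MvPolynomial.X 1)
    let z : R := Ideal.Quotient.mk _ (MvPolynomial.X 2)
    ∃ bs : Module.Basis (Fin 2) R (LinearMap.ker (syzMap ![x ^ 2, y ^ 2, z ^ 2])),
      pieceCond 𝒜 (30 - 30) (30 - 20) (30 - 12) (bs 0 : Fin 3 → R) ∧
      pieceCond 𝒜 (32 - 30) (32 - 20) (32 - 12) (bs 1 : Fin 3 → R) :=
  stmt_18_general 𝒜 hY hZ
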